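/- Let τ lie in the complex upper half-plane and let Δ₁, Δ₂, Δ₃ ∈ ℂ. Define g(u) := ∑_{a=1}^{3} [θ₁′(u + Δ_a;τ)/θ₁(u + Δ_a;τ) + θ₁′(−u + Δ_a;τ)/θ₁(−u + Δ_a;τ)] and, for I = 2, 3, 4, S_I := ∑_{a=1}^{3} θ_I′(Δ_a;τ)/θ_I(Δ_a;τ). Assume θ₁(v + Δ_a;τ) ≠ 0 for every a and every v ∈ {1/2, −1/2, τ/2, −τ/2, (τ−1)/2, −(τ−1)/2}, and θ_I(Δ_a;τ) ≠ 0 for all I ∈ {2,3,4} and all a. Then [g(1/2) + 2g(τ/2)]·[g(1/2) + 2g((τ−1)/2)] − [g(1/2) − g(τ/2)]·[g(1/2) − g((τ−1)/2)] = 12·(S₂S₃ + S₂S₄ + S₃S₄). (This is the Jacobian determinant of the SU(3) elliptic Bethe Ansatz equations evaluated at the exact non-standard solution (u₂₁, u₃₁) = (1/2, τ/2).) -/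

import Mathlib

noncomputable def θ₁ (u τ : ℂ) : ℂ :=
  -Complex.I * Complex.exp (Real.pi * Complex.I * τ / 4 + Real.pi * Complex.I * u) *
    jacobiTheta₂ (u + (1 + τ) / 2) τ

noncomputable def θ₂ (u τ : ℂ) : ℂ :=
  Complex.exp (Real.pi * Complex.I * τ / 4 + Real.pi * Complex.I * u) *
    jacobiTheta₂ (u + τ / 2) τ

noncomputable def θ₃ (u τ : ℂ) : ℂ := jacobiTheta₂ u τ

noncomputable def θ₄ (u τ : ℂ) : ℂ := jacobiTheta₂ (u + 1 / 2) τ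

noncomputable def θ₁' (u τ : ℂ) : ℂ := deriv (fun v => θ₁ v τ) u

noncomputable def θ₂' (u τ : ℂ) : ℂ := deriv (fun v => θ₂ v τ) u

noncomputable def θ₃' (u τ : ℂ) : ℂ := deriv (fun v => θ₃ v τ) u

noncomputable def θ₄' (u τ : ℂ) : ℂ := deriv (fun v => θ₄ v τ) u

/-! At the half periods `1/2`, `τ/2` and `(τ - 1)/2`, quasi-periodicity of `jacobiTheta₂` turns
`θ₁ (± v + u)` into `θ₂ u`, `θ₄ u`, `θ₃ u` respectively, times a nonzero constant and a factor
`exp (∓ k u)`. In the logarithmic derivatives at `v + Δ` and `-v + Δ` these factors contribute the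
opposite constants `∓ k`, so `g (1/2) = 2 S₂`, `g (τ/2) = 2 S₄`, `g ((τ - 1)/2) = 2 S₃`, and the
claim becomes a polynomial identity in `S₂, S₃, S₄`. -/

open Complex Real

lemma logDeriv_comp_const_add (F : ℂ → ℂ) (v x : ℂ) :
    logDeriv (fun u => F (v + u)) x = logDeriv F (v + x) := by
  simp only [logDeriv_apply, deriv_comp_const_add]

lemma logDeriv_const_add_of_eq_mul_cexp {F f : ℂ → ℂ} {v c k x : ℂ} (hc : c ≠ 0)
    (hF : ∀ u, F (v + u) = c * cexp (k * u) * f u) (hf : DifferentiableAt ℂ f x)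
    (hfx : f x ≠ 0) : logDeriv F (v + x) = k + logDeriv f x := by
  have hexp : HasDerivAt (fun u => c * cexp (k * u)) (c * (cexp (k * x) * k)) x :=
    (((hasDerivAt_id x).const_mul k).cexp.congr_deriv (by simp)).const_mul c
  rw [← logDeriv_comp_const_add, funext hF, logDeriv_mul x (by simp [hc]) hfx
    hexp.differentiableAt hf, logDeriv_apply _ x, hexp.deriv]
  field_simp

lemma logDeriv_const_add_add_logDeriv_neg_const_add {F f : ℂ → ℂ} {v c₁ c₂ k x : ℂ}
    (hc₁ : c₁ ≠ 0) (hc₂ : c₂ ≠ 0) (hF₁ : ∀ u, F (v + u) = c₁ * cexp (-k * u) * f u)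
    (hF₂ : ∀ u, F (-v + u) = c₂ * cexp (k * u) * f u) (hf : DifferentiableAt ℂ f x)
    (hfx : f x ≠ 0) : logDeriv F (v + x) + logDeriv F (-v + x) = 2 * logDeriv f x := by
  rw [logDeriv_const_add_of_eq_mul_cexp hc₁ hF₁ hf hfx,
    logDeriv_const_add_of_eq_mul_cexp hc₂ hF₂ hf hfx]
  ring

lemma θ₁_one_half_add (u τ : ℂ) : θ₁ (1 / 2 + u) τ = θ₂ u τ := by
  have harg : 1 / 2 + u + (1 + τ) / 2 = u + τ / 2 + 1 := by ring
  have hexp : cexp (π * I * τ / 4 + π * I * (1 / 2 + u)) =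
      cexp (π * I * τ / 4 + π * I * u) * cexp (π / 2 * I) := by
    rw [← Complex.exp_add]; ring_nf
  rw [θ₁, θ₂, harg, jacobiTheta₂_add_left, hexp, exp_pi_div_two_mul_I]
  linear_combination (-(cexp (π * I * τ / 4 + π * I * u) * jacobiTheta₂ (u + τ / 2) τ)) * I_sq

lemma θ₁_neg_one_half_add (u τ : ℂ) : θ₁ (-(1 / 2) + u) τ = -θ₂ u τ := by
  have harg : -(1 / 2) + u + (1 + τ) / 2 = u + τ / 2 := by ring
  have hexp : cexp (π * I * τ / 4 + π * I * (-(1 / 2) + u)) =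
      cexp (π * I * τ / 4 + π * I * u) * cexp (-π / 2 * I) := by
    rw [← Complex.exp_add]; ring_nf
  rw [θ₁, θ₂, harg, hexp, exp_neg_pi_div_two_mul_I]
  linear_combination (cexp (π * I * τ / 4 + π * I * u) * jacobiTheta₂ (u + τ / 2) τ) * I_sq

lemma θ₁_half_τ_add (u τ : ℂ) :
    θ₁ (τ / 2 + u) τ = I * cexp (-(π * I * τ / 4)) * cexp (-(π * I) * u) * θ₄ u τ := by
  have harg : τ / 2 + u + (1 + τ) / 2 = u + 1 / 2 + τ := by ring
  have hexp : cexp (π * I * τ / 4 + π * I * (τ / 2 + u)) * cexp (-π * I * (τ + 2 * (u + 1 / 2))) =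
      cexp (-(π * I * τ / 4)) * cexp (-(π * I) * u) * cexp (-(π * I)) := by
    simp only [← Complex.exp_add]; ring_nf
  rw [exp_neg_pi_mul_I] at hexp
  rw [θ₁, θ₄, harg, jacobiTheta₂_add_left']
  linear_combination (-I * jacobiTheta₂ (u + 1 / 2) τ) * hexp

lemma θ₁_neg_half_τ_add (u τ : ℂ) :
    θ₁ (-(τ / 2) + u) τ = -I * cexp (-(π * I * τ / 4)) * cexp (π * I * u) * θ₄ u τ := by
  have harg : -(τ / 2) + u + (1 + τ) / 2 = u + 1 / 2 := by ring
  have hexp : cexp (π * I * τ / 4 + π * I * (-(τ / 2) + u)) =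
      cexp (-(π * I * τ / 4)) * cexp (π * I * u) := by
    rw [← Complex.exp_add]; ring_nf
  rw [θ₁, θ₄, harg, hexp]
  ring

lemma θ₁_half_τ_sub_one_add (u τ : ℂ) :
    θ₁ ((τ - 1) / 2 + u) τ = -cexp (-(π * I * τ / 4)) * cexp (-(π * I) * u) * θ₃ u τ := by
  have harg : (τ - 1) / 2 + u + (1 + τ) / 2 = u + τ := by ring
  have hexp : cexp (π * I * τ / 4 + π * I * ((τ - 1) / 2 + u)) * cexp (-π * I * (τ + 2 * u)) =
      cexp (-(π * I * τ / 4)) * cexp (-(π * I) * u) * cexp (-π / 2 * I) := by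
    simp only [← Complex.exp_add]; ring_nf
  rw [exp_neg_pi_div_two_mul_I] at hexp
  rw [θ₁, θ₃, harg, jacobiTheta₂_add_left']
  linear_combination (-I * jacobiTheta₂ u τ) * hexp +
    (jacobiTheta₂ u τ * cexp (-(π * I * τ / 4)) * cexp (-(π * I) * u)) * I_sq

lemma θ₁_neg_half_τ_sub_one_add (u τ : ℂ) :
    θ₁ (-((τ - 1) / 2) + u) τ = cexp (-(π * I * τ / 4)) * cexp (π * I * u) * θ₃ u τ := by
  have harg : -((τ - 1) / 2) + u + (1 + τ) / 2 = u + 1 := by ring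
  have hexp : cexp (π * I * τ / 4 + π * I * (-((τ - 1) / 2) + u)) =
      cexp (-(π * I * τ / 4)) * cexp (π * I * u) * cexp (π / 2 * I) := by
    simp only [← Complex.exp_add]; ring_nf
  rw [θ₁, θ₃, harg, jacobiTheta₂_add_left, hexp, exp_pi_div_two_mul_I]
  linear_combination (-(cexp (-(π * I * τ / 4)) * cexp (π * I * u) * jacobiTheta₂ u τ)) * I_sq

lemma differentiableAt_θ₂ {τ : ℂ} (hτ : 0 < τ.im) (x : ℂ) : DifferentiableAt ℂ (θ₂ · τ) x := by
  have := (differentiableAt_jacobiTheta₂_fst (x + τ / 2) hτ).comp x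
    ((differentiableAt_id).add_const (τ / 2))
  unfold θ₂
  fun_prop

lemma differentiableAt_θ₃ {τ : ℂ} (hτ : 0 < τ.im) (x : ℂ) : DifferentiableAt ℂ (θ₃ · τ) x :=
  differentiableAt_jacobiTheta₂_fst x hτ

lemma differentiableAt_θ₄ {τ : ℂ} (hτ : 0 < τ.im) (x : ℂ) : DifferentiableAt ℂ (θ₄ · τ) x :=
  (differentiableAt_jacobiTheta₂_fst (x + 1 / 2) hτ).comp x
    ((differentiableAt_id).add_const (1 / 2))

lemma θ₁_logDeriv_sum_one_half {τ : ℂ} (hτ : 0 < τ.im) {x : ℂ} (hx : θ₂ x τ ≠ 0) :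
    θ₁' (1 / 2 + x) τ / θ₁ (1 / 2 + x) τ + θ₁' (-(1 / 2) + x) τ / θ₁ (-(1 / 2) + x) τ =
      2 * (θ₂' x τ / θ₂ x τ) :=
  logDeriv_const_add_add_logDeriv_neg_const_add (k := 0) one_ne_zero (neg_ne_zero.2 one_ne_zero)
    (fun u => by rw [θ₁_one_half_add]; simp) (fun u => by rw [θ₁_neg_one_half_add]; simp)
    (differentiableAt_θ₂ hτ x) hx

lemma θ₁_logDeriv_sum_half_τ {τ : ℂ} (hτ : 0 < τ.im) {x : ℂ} (hx : θ₄ x τ ≠ 0) :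
    θ₁' (τ / 2 + x) τ / θ₁ (τ / 2 + x) τ + θ₁' (-(τ / 2) + x) τ / θ₁ (-(τ / 2) + x) τ =
      2 * (θ₄' x τ / θ₄ x τ) :=
  logDeriv_const_add_add_logDeriv_neg_const_add (by simp) (by simp) (θ₁_half_τ_add · τ)
    (θ₁_neg_half_τ_add · τ) (differentiableAt_θ₄ hτ x) hx

lemma θ₁_logDeriv_sum_half_τ_sub_one {τ : ℂ} (hτ : 0 < τ.im) {x : ℂ} (hx : θ₃ x τ ≠ 0) :
    θ₁' ((τ - 1) / 2 + x) τ / θ₁ ((τ - 1) / 2 + x) τ +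
        θ₁' (-((τ - 1) / 2) + x) τ / θ₁ (-((τ - 1) / 2) + x) τ =
      2 * (θ₃' x τ / θ₃ x τ) :=
  logDeriv_const_add_add_logDeriv_neg_const_add (by simp) (by simp) (θ₁_half_τ_sub_one_add · τ)
    (θ₁_neg_half_τ_sub_one_add · τ) (differentiableAt_θ₃ hτ x) hx

theorem SU3_jacobian_at_nonstandard_solution_general (τ : ℂ) (hτ : 0 < τ.im) (Δ : Fin 3 → ℂ)
    (g : ℂ → ℂ)
    (hg : g = fun u => ∑ a, (θ₁' (u + Δ a) τ / θ₁ (u + Δ a) τ +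
      θ₁' (-u + Δ a) τ / θ₁ (-u + Δ a) τ))
    (S₂ S₃ S₄ : ℂ)
    (hS₂ : S₂ = ∑ a, θ₂' (Δ a) τ / θ₂ (Δ a) τ)
    (hS₃ : S₃ = ∑ a, θ₃' (Δ a) τ / θ₃ (Δ a) τ)
    (hS₄ : S₄ = ∑ a, θ₄' (Δ a) τ / θ₄ (Δ a) τ)
    (h2 : ∀ a, θ₂ (Δ a) τ ≠ 0) (h3 : ∀ a, θ₃ (Δ a) τ ≠ 0) (h4 : ∀ a, θ₄ (Δ a) τ ≠ 0) :
    (g (1 / 2) + 2 * g (τ / 2)) * (g (1 / 2) + 2 * g ((τ - 1) / 2)) -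
      (g (1 / 2) - g (τ / 2)) * (g (1 / 2) - g ((τ - 1) / 2)) =
      12 * (S₂ * S₃ + S₂ * S₄ + S₃ * S₄) := by
  have hg₂ : g (1 / 2) = 2 * S₂ := by
    simp only [hg, hS₂, Finset.mul_sum]
    exact Finset.sum_congr rfl fun a _ => θ₁_logDeriv_sum_one_half hτ (h2 a)
  have hg₄ : g (τ / 2) = 2 * S₄ := by
    simp only [hg, hS₄, Finset.mul_sum]
    exact Finset.sum_congr rfl fun a _ => θ₁_logDeriv_sum_half_τ hτ (h4 a)
  have hg₃ : g ((τ - 1) / 2) = 2 * S₃ := by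
    simp only [hg, hS₃, Finset.mul_sum]
    exact Finset.sum_congr rfl fun a _ => θ₁_logDeriv_sum_half_τ_sub_one hτ (h3 a)
  rw [hg₂, hg₄, hg₃]
  ring

theorem SU3_jacobian_at_nonstandard_solution (τ : ℂ) (hτ : 0 < τ.im) (Δ : Fin 3 → ℂ)
    (g : ℂ → ℂ)
    (hg : g = fun u => ∑ a, (θ₁' (u + Δ a) τ / θ₁ (u + Δ a) τ +
      θ₁' (-u + Δ a) τ / θ₁ (-u + Δ a) τ))
    (S₂ S₃ S₄ : ℂ)
    (hS₂ : S₂ = ∑ a, θ₂' (Δ a) τ / θ₂ (Δ a) τ)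
    (hS₃ : S₃ = ∑ a, θ₃' (Δ a) τ / θ₃ (Δ a) τ)
    (hS₄ : S₄ = ∑ a, θ₄' (Δ a) τ / θ₄ (Δ a) τ)
    (hne : ∀ a, ∀ v ∈ ({1 / 2, -(1 / 2), τ / 2, -(τ / 2), (τ - 1) / 2,
      -((τ - 1) / 2)} : Set ℂ), θ₁ (v + Δ a) τ ≠ 0)
    (h2 : ∀ a, θ₂ (Δ a) τ ≠ 0) (h3 : ∀ a, θ₃ (Δ a) τ ≠ 0) (h4 : ∀ a, θ₄ (Δ a) τ ≠ 0) :
    (g (1 / 2) + 2 * g (τ / 2)) * (g (1 / 2) + 2 * g ((τ - 1) / 2)) -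
      (g (1 / 2) - g (τ / 2)) * (g (1 / 2) - g ((τ - 1) / 2)) =
      12 * (S₂ * S₃ + S₂ * S₄ + S₃ * S₄) :=
  SU3_jacobian_at_nonstandard_solution_general τ hτ Δ g hg S₂ S₃ S₄ hS₂ hS₃ hS₄ h2 h3 h4
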